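/- Let m = 2, suppose the simplex (x = 0, z_1, z_2) is monotone causal for the speed profile V (i.e., C(ξ) ≥ max(ξ_1 C_1, ξ_2 C_2) on Ξ_2), and let 0 < δ ≤ min(C_1, C_2). If every point of V_s, when written as θ_1 v_1 + θ_2 v_2 with θ_1, θ_2 ≥ 0, satisfies θ_1 + θ_2·δ/C_2 ≤ 1 and θ_2 + θ_1·δ/C_1 ≤ 1 (equivalently, V_s is contained in the quadrilateral with vertices 0, v_1, v_2 and w(δ) = θ_1^#(δ)v_1 + θ_2^#(δ)v_2, where θ_1^#(δ) = C_1(C_2−δ)/(C_1C_2−δ²) and θ_2^#(δ) = C_2(C_1−δ)/(C_1C_2−δ²)), then for every ξ ∈ Ξ_2: C(ξ) ≥ ξ_1 C_1 + ξ_2 δ and C(ξ) ≥ ξ_1 δ + ξ_2 C_2; that is, the simplex is monotone δ-causal. -/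

import Mathlib

/-! Write `w = ξ₁ z₁ + ξ₂ z₂` and `C = C(ξ)`. Since `z_j = C_j v_j` and `w = C v(ξ)`, the velocity
`v(ξ) ∈ V_s` has the coordinates `θ_j = ξ_j C_j / C` in the basis `v₁, v₂`. Feeding these into the
two quadrilateral inequalities and multiplying by `C` gives exactly the two δ-causality bounds. -/

/-- The semi-Lagrangian transition cost `C(ξ) = |x̃_ξ| / f(a_ξ)`, written as a
function of the waypoint `w = x̃_ξ`.  In particular `slCost f (z j) = C_j`. -/
noncomputable def slCost {E : Type*} [NormedAddCommGroup E] [InnerProductSpace ℝ E]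
    (f : E → ℝ) (w : E) : ℝ := ‖w‖ / f (‖w‖⁻¹ • w)

/-- The velocity in the direction of `w`:  `slVel f (z j) = v_j`. -/
noncomputable def slVel {E : Type*} [NormedAddCommGroup E] [InnerProductSpace ℝ E]
    (f : E → ℝ) (w : E) : E := f (‖w‖⁻¹ • w) • (‖w‖⁻¹ • w)

/-- The speed profile `V = {f(a)·a : |a| = 1}`. -/
def speedProfile {E : Type*} [NormedAddCommGroup E] [InnerProductSpace ℝ E]
    (f : E → ℝ) : Set E :=
  {v | ∃ a : E, ‖a‖ = 1 ∧ v = f a • a}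

section SpeedProfile

variable {E : Type*} [NormedAddCommGroup E] [InnerProductSpace ℝ E] {f : E → ℝ} {w : E}

lemma slVel_mem_speedProfile (hw : w ≠ 0) : slVel f w ∈ speedProfile f :=
  ⟨‖w‖⁻¹ • w, norm_smul_inv_norm hw, rfl⟩

lemma slCost_pos (hf : ∀ a : E, ‖a‖ = 1 → 0 < f a) (hw : w ≠ 0) : 0 < slCost f w :=
  div_pos (norm_pos_iff.2 hw) (hf _ (norm_smul_inv_norm hw))

lemma slCost_smul_slVel (hf : ∀ a : E, ‖a‖ = 1 → 0 < f a) (hw : w ≠ 0) :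
    slCost f w • slVel f w = w := by
  have hfw : f (‖w‖⁻¹ • w) ≠ 0 := (hf _ (norm_smul_inv_norm hw)).ne'
  have hnw : ‖w‖ ≠ 0 := norm_ne_zero_iff.2 hw
  rw [slCost, slVel, smul_smul, smul_smul, div_mul_cancel₀ _ hfw, mul_inv_cancel₀ hnw, one_smul]

lemma slVel_smul_add_smul (hf : ∀ a : E, ‖a‖ = 1 → 0 < f a) {z₁ z₂ : E} (hz₁ : z₁ ≠ 0)
    (hz₂ : z₂ ≠ 0) {ξ₁ ξ₂ : ℝ} (hw : ξ₁ • z₁ + ξ₂ • z₂ ≠ 0) :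
    slVel f (ξ₁ • z₁ + ξ₂ • z₂) =
      (ξ₁ * slCost f z₁ / slCost f (ξ₁ • z₁ + ξ₂ • z₂)) • slVel f z₁ +
        (ξ₂ * slCost f z₂ / slCost f (ξ₁ • z₁ + ξ₂ • z₂)) • slVel f z₂ := by
  set C := slCost f (ξ₁ • z₁ + ξ₂ • z₂)
  have hC : C ≠ 0 := (slCost_pos hf hw).ne'
  refine smul_right_injective E hC ?_
  simp only [smul_add, smul_smul, mul_div_cancel₀ _ hC, mul_smul,
    slCost_smul_slVel hf hz₁, slCost_smul_slVel hf hz₂]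
  exact slCost_smul_slVel hf hw

end SpeedProfile

lemma smul_add_smul_ne_zero {V : Type*} [AddCommGroup V] [Module ℝ V] {z₁ z₂ : V}
    (hz : LinearIndependent ℝ ![z₁, z₂]) {ξ₁ ξ₂ : ℝ} (hξ : ξ₁ + ξ₂ = 1) :
    ξ₁ • z₁ + ξ₂ • z₂ ≠ 0 := by
  intro h
  obtain ⟨rfl, rfl⟩ := LinearIndependent.pair_iff.1 hz ξ₁ ξ₂ h
  norm_num at hξ

lemma mul_add_mul_le_of_coord_le_one {C C₁ C₂ ξ₁ ξ₂ δ : ℝ} (hC : 0 < C) (hC₂ : 0 < C₂)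
    (h : ξ₁ * C₁ / C + ξ₂ * C₂ / C * δ / C₂ ≤ 1) : ξ₁ * C₁ + ξ₂ * δ ≤ C := by
  have hθ : ξ₁ * C₁ / C + ξ₂ * C₂ / C * δ / C₂ = (ξ₁ * C₁ + ξ₂ * δ) / C := by field_simp
  rwa [hθ, div_le_one hC] at h

theorem stmt12_general (z₁ z₂ : EuclideanSpace ℝ (Fin 2))
    (hz : LinearIndependent ℝ ![z₁, z₂])
    (f : EuclideanSpace ℝ (Fin 2) → ℝ)
    (hfpos : ∀ a : EuclideanSpace ℝ (Fin 2), ‖a‖ = 1 → 0 < f a)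
    (δ : ℝ)
    -- V_s is contained in the δ-quadrilateral
    (hcontain : ∀ θ₁ θ₂ : ℝ, 0 ≤ θ₁ → 0 ≤ θ₂ →
      θ₁ • slVel f z₁ + θ₂ • slVel f z₂ ∈ speedProfile f →
      θ₁ + θ₂ * δ / slCost f z₂ ≤ 1 ∧ θ₂ + θ₁ * δ / slCost f z₁ ≤ 1) :
    ∀ ξ₁ ξ₂ : ℝ, 0 ≤ ξ₁ → 0 ≤ ξ₂ → ξ₁ + ξ₂ = 1 →
      ξ₁ * slCost f z₁ + ξ₂ * δ ≤ slCost f (ξ₁ • z₁ + ξ₂ • z₂) ∧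
      ξ₁ * δ + ξ₂ * slCost f z₂ ≤ slCost f (ξ₁ • z₁ + ξ₂ • z₂) := by
  intro ξ₁ ξ₂ hξ₁ hξ₂ hξ
  have hz₁ : z₁ ≠ 0 := by simpa using hz.ne_zero 0
  have hz₂ : z₂ ≠ 0 := by simpa using hz.ne_zero 1
  have hw := smul_add_smul_ne_zero hz hξ
  have hC := slCost_pos hfpos hw
  have hC₁ := slCost_pos hfpos hz₁
  have hC₂ := slCost_pos hfpos hz₂
  have hv := slVel_mem_speedProfile (f := f) hw
  rw [slVel_smul_add_smul hfpos hz₁ hz₂ hw] at hv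
  obtain ⟨h₁, h₂⟩ := hcontain _ _ (by positivity) (by positivity) hv
  refine ⟨mul_add_mul_le_of_coord_le_one hC hC₂ h₁, ?_⟩
  rw [add_comm]
  exact mul_add_mul_le_of_coord_le_one hC hC₁ h₂

/-- δ-causality condition on `V` in `ℝ²`.
Suppose the simplex `(x = 0, z₁, z₂)` is monotone causal for `V`, let
`0 < δ ≤ min(C₁, C₂)`, and suppose every point of `V_s`, written as
`θ₁v₁ + θ₂v₂` with `θ₁, θ₂ ≥ 0`, satisfies `θ₁ + θ₂δ/C₂ ≤ 1` and
`θ₂ + θ₁δ/C₁ ≤ 1` (containment in the quadrilateral with vertices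
`0, v₁, v₂, w(δ)`).  Then `C(ξ) ≥ ξ₁C₁ + ξ₂δ` and `C(ξ) ≥ ξ₁δ + ξ₂C₂` on `Ξ₂`;
i.e., the simplex is monotone δ-causal. -/
theorem stmt12 (z₁ z₂ : EuclideanSpace ℝ (Fin 2))
    (hz : LinearIndependent ℝ ![z₁, z₂])
    (f : EuclideanSpace ℝ (Fin 2) → ℝ)
    (hfc : ContinuousOn f (Metric.sphere (0 : EuclideanSpace ℝ (Fin 2)) 1))
    (hfpos : ∀ a : EuclideanSpace ℝ (Fin 2), ‖a‖ = 1 → 0 < f a)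
    -- the simplex is monotone causal
    (hMC : ∀ ξ₁ ξ₂ : ℝ, 0 ≤ ξ₁ → 0 ≤ ξ₂ → ξ₁ + ξ₂ = 1 →
      max (ξ₁ * slCost f z₁) (ξ₂ * slCost f z₂) ≤ slCost f (ξ₁ • z₁ + ξ₂ • z₂))
    (δ : ℝ) (hδ0 : 0 < δ) (hδ : δ ≤ min (slCost f z₁) (slCost f z₂))
    -- V_s is contained in the δ-quadrilateral
    (hcontain : ∀ θ₁ θ₂ : ℝ, 0 ≤ θ₁ → 0 ≤ θ₂ →
      θ₁ • slVel f z₁ + θ₂ • slVel f z₂ ∈ speedProfile f →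
      θ₁ + θ₂ * δ / slCost f z₂ ≤ 1 ∧ θ₂ + θ₁ * δ / slCost f z₁ ≤ 1) :
    ∀ ξ₁ ξ₂ : ℝ, 0 ≤ ξ₁ → 0 ≤ ξ₂ → ξ₁ + ξ₂ = 1 →
      ξ₁ * slCost f z₁ + ξ₂ * δ ≤ slCost f (ξ₁ • z₁ + ξ₂ • z₂) ∧
      ξ₁ * δ + ξ₂ * slCost f z₂ ≤ slCost f (ξ₁ • z₁ + ξ₂ • z₂) :=
  stmt12_general z₁ z₂ hz f hfpos δ hcontain
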